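/- Let d ≥ 2, let A = (a_0,…,a_{d−1}) be a d-tuple of points in general position in ℝ², and let K ⊂ ℝ² be a convex compact set containing all the a_j. Let f be a continuous real-valued function on K and let ℋ[A;f](x) := Σ_{0≤s<t≤d−1} Q_{st}(x) · ∫_0^1 f(a_s + w(a_t − a_s)) dw be the Hakopian interpolation polynomial of f at A. Then for every polynomial Q of degree at most d−2 on ℝ², sup_{x∈K} |f(x) − ℋ[A;f](x)| ≤ (1 + Σ_{0≤s<t≤d−1} sup_{x∈K} |Q_{st}(x)|) · sup_{x∈K} |f(x) − Q(x)|. -/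
import Mathlib


open Finset

/-- Euclidean scalar product on ℝ² ≅ ℂ. -/
noncomputable def inner2 (x y : ℂ) : ℝ := x.re * y.re + x.im * y.im

/-- The univariate polynomial h_{st} associated to a tuple `a` of points of ℝ² ≅ ℂ:
`h_{st}(w) = ∏_{m=0, m≠s}^{d−1} (w − ⟨(a_s−a_t)^⊥, a_m⟩)`, where `x^⊥ = i·x`. -/
noncomputable def hPoly (d s t : ℕ) (a : ℕ → ℂ) : ℝ → ℝ :=
  fun w => ∏ m ∈ (Finset.range d).erase s, (w - inner2 (Complex.I * (a s - a t)) (a m))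

/-- The points `a 0, …, a (d-1)` are in general position: no three of them are collinear. -/
def GenPos (d : ℕ) (a : ℕ → ℂ) : Prop :=
  ∀ i j k, i < d → j < d → k < d → i ≠ j → j ≠ k → i ≠ k →
    ¬ Collinear ℝ ({a i, a j, a k} : Set ℂ)


/-- The polynomial `Q_{st}(x) = h′_{st}(⟨(a_s−a_t)^⊥, x⟩) / h′_{st}(⟨(a_s−a_t)^⊥, a_s⟩)`. -/
noncomputable def Qst (d s t : ℕ) (a : ℕ → ℂ) (x : ℂ) : ℝ :=
  deriv (hPoly d s t a) (inner2 (Complex.I * (a s - a t)) x) /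
    deriv (hPoly d s t a) (inner2 (Complex.I * (a s - a t)) (a s))

set_option linter.unnecessarySeqFocus false
open Polynomial


lemma inner2_add (x y z : ℂ) : inner2 x (y + z) = inner2 x y + inner2 x z := by
  simp [inner2]; ring

lemma inner2_sub (x y z : ℂ) : inner2 x (y - z) = inner2 x y - inner2 x z := by
  simp [inner2]; ring

lemma inner2_smul (x : ℂ) (w : ℝ) (y : ℂ) : inner2 x ((w:ℂ) * y) = w * inner2 x y := by
  simp [inner2]; ring

lemma inner2_perp_self (z : ℂ) : inner2 (Complex.I * z) z = 0 := by
  simp [inner2]; ring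

lemma collinear_of_inner2 (z1 z2 z3 : ℂ) (h : inner2 (Complex.I * (z1 - z2)) (z3 - z1) = 0) :
    Collinear ℝ ({z1, z2, z3} : Set ℂ) := by
  rcases eq_or_ne z1 z2 with h12 | h12
  · rw [h12, Set.insert_eq_self.2 (by simp)]
    exact collinear_pair ℝ _ _
  · set u := z1 - z2 with hu
    set v := z3 - z1 with hv
    have hD : u.re ^ 2 + u.im ^ 2 ≠ 0 := by
      intro h0
      apply h12
      have hre : u.re = 0 := by nlinarith [sq_nonneg u.re, sq_nonneg u.im]
      have him : u.im = 0 := by nlinarith [sq_nonneg u.re, sq_nonneg u.im]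
      have : u = 0 := Complex.ext hre him
      rw [hu, sub_eq_zero] at this; exact this
    have hperp : u.re * v.im - u.im * v.re = 0 := by
      simp [inner2] at h; linarith [h]
    set r : ℝ := (u.re * v.re + u.im * v.im) / (u.re ^ 2 + u.im ^ 2) with hr
    have hvu : v = (r : ℂ) * u := by
      apply Complex.ext
      · simp only [Complex.mul_re, Complex.ofReal_re, Complex.ofReal_im, hr]
        field_simp
        linear_combination (-u.im) * hperp
      · simp only [Complex.mul_im, Complex.ofReal_re, Complex.ofReal_im, hr]
        field_simp
        linear_combination (u.re) * hperp
    rw [collinear_iff_of_mem (Set.mem_insert z1 _)]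
    refine ⟨u, fun p hp => ?_⟩
    simp only [Set.mem_insert_iff, Set.mem_singleton_iff] at hp
    rcases hp with h1 | h1 | h1
    · exact ⟨0, by rw [h1]; simp⟩
    · refine ⟨-1, ?_⟩
      rw [h1]
      show z2 = (-1 : ℝ) • u + z1
      rw [Complex.real_smul, hu]
      push_cast; ring
    · refine ⟨r, ?_⟩
      rw [h1]
      show z3 = (r : ℝ) • u + z1
      rw [Complex.real_smul, ← hvu, hv]
      ring

/-- `λ_m = ⟨(a_s − a_t)^⊥, a_m⟩`. -/
noncomputable def lam (s t : ℕ) (a : ℕ → ℂ) (m : ℕ) : ℝ :=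
  inner2 (Complex.I * (a s - a t)) (a m)

/-- `h_{st}` as a `Polynomial ℝ`. -/
noncomputable def HstP (d s t : ℕ) (a : ℕ → ℂ) : Polynomial ℝ :=
  ∏ m ∈ (Finset.range d).erase s, (X - C (lam s t a m))

section
variable {d s t m s' t' : ℕ} {a : ℕ → ℂ}

lemma lam_t_eq' : lam s t a t = lam s t a s := by
  have h0 := inner2_perp_self (a s - a t)
  rw [inner2_sub] at h0
  unfold lam
  linarith

lemma hPoly_eq : hPoly d s t a = fun w => (HstP d s t a).eval w := by
  funext w
  simp [hPoly, HstP, eval_prod, lam]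

lemma deriv_hPoly :
    deriv (hPoly d s t a) = fun w => (HstP d s t a).derivative.eval w := by
  rw [hPoly_eq]
  funext w
  exact Polynomial.deriv (HstP d s t a)

lemma Qst_eq (x : ℂ) :
    Qst d s t a x = (HstP d s t a).derivative.eval (inner2 (Complex.I * (a s - a t)) x) /
      (HstP d s t a).derivative.eval (lam s t a s) := by
  rw [Qst, deriv_hPoly]; rfl

lemma lam_ne (hgen : GenPos d a) (hs : s < d) (ht : t < d) (hm : m < d)
    (hms : m ≠ s) (hmt : m ≠ t) (hst : s ≠ t) : lam s t a m ≠ lam s t a s := by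
  intro h
  apply hgen s t m hs ht hm hst (fun h' => hmt h'.symm) (fun h' => hms h'.symm)
  apply collinear_of_inner2
  have : inner2 (Complex.I * (a s - a t)) (a m - a s) = lam s t a m - lam s t a s := by
    rw [inner2_sub]; rfl
  rw [this, h, sub_self]

lemma Hst_root (hs : s < d) (ht : t < d) (hst : s ≠ t) (hm : m < d) :
    (HstP d s t a).eval (lam s t a m) = 0 := by
  rcases eq_or_ne m s with rfl | hms
  · have htm : t ∈ (Finset.range d).erase m :=
      Finset.mem_erase.2 ⟨fun h => hst h.symm, Finset.mem_range.2 ht⟩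
    rw [HstP, ← Finset.mul_prod_erase _ _ htm, eval_mul, eval_sub, eval_X, eval_C,
      sub_eq_zero.2 lam_t_eq'.symm, zero_mul]
  · have hmm : m ∈ (Finset.range d).erase s :=
      Finset.mem_erase.2 ⟨hms, Finset.mem_range.2 hm⟩
    rw [HstP, ← Finset.mul_prod_erase _ _ hmm]
    simp

lemma Hst_deriv_s (ht : t < d) (hst : s ≠ t) :
    (HstP d s t a).derivative.eval (lam s t a s)
      = ∏ m ∈ ((Finset.range d).erase s).erase t, (lam s t a s - lam s t a m) := by
  have htm : t ∈ (Finset.range d).erase s :=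
    Finset.mem_erase.2 ⟨fun h => hst h.symm, Finset.mem_range.2 ht⟩
  rw [HstP, ← Finset.mul_prod_erase _ _ htm, derivative_mul]
  simp [lam_t_eq', eval_prod]

lemma Hst_deriv_s_ne (hgen : GenPos d a) (hs : s < d) (ht : t < d) (hst : s ≠ t) :
    (HstP d s t a).derivative.eval (lam s t a s) ≠ 0 := by
  rw [Hst_deriv_s ht hst]
  apply Finset.prod_ne_zero_iff.2
  intro m hm
  simp only [Finset.mem_erase, Finset.mem_range] at hm
  obtain ⟨hmt, hms, hmd⟩ := hm
  exact sub_ne_zero.2 (Ne.symm (lam_ne hgen hs ht hmd hms hmt hst))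

lemma Hst_deriv_double (hs' : s' < d) (ht' : t' < d) (hs's : s' ≠ s) (ht's : t' ≠ s)
    (hne : s' ≠ t') (heq : lam s t a t' = lam s t a s') :
    (HstP d s t a).derivative.eval (lam s t a s') = 0 := by
  have h1 : s' ∈ (Finset.range d).erase s :=
    Finset.mem_erase.2 ⟨hs's, Finset.mem_range.2 hs'⟩
  have h2 : t' ∈ ((Finset.range d).erase s).erase s' :=
    Finset.mem_erase.2 ⟨fun h => hne h.symm, Finset.mem_erase.2 ⟨ht's, Finset.mem_range.2 ht'⟩⟩
  rw [HstP, ← Finset.mul_prod_erase _ _ h1, ← Finset.mul_prod_erase _ _ h2]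
  simp [derivative_mul, heq]

end

lemma inner2_path (θ x y : ℂ) (w : ℝ) :
    inner2 θ (x + (w:ℂ) * (y - x)) = inner2 θ x + w * (inner2 θ y - inner2 θ x) := by
  simp only [inner2, Complex.add_re, Complex.add_im, Complex.mul_re, Complex.mul_im,
    Complex.ofReal_re, Complex.ofReal_im, Complex.sub_re, Complex.sub_im]
  ring

lemma integral_deriv_poly (p : Polynomial ℝ) (α β : ℝ) (hβ : β ≠ 0) :
    ∫ w in (0:ℝ)..1, p.derivative.eval (α + w * β) = (p.eval (α + β) - p.eval α) / β := by
  have hder : ∀ w : ℝ, HasDerivAt (fun u => p.eval (α + u * β) / β)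
      (p.derivative.eval (α + w * β)) w := by
    intro w
    have h1 : HasDerivAt (fun u : ℝ => α + u * β) β w := by
      simpa using ((hasDerivAt_id w).mul_const β).const_add α
    have h2 := (p.hasDerivAt (α + w * β)).comp w h1
    have h3 := h2.div_const β
    simpa [mul_div_cancel_right₀ _ hβ] using h3
  have hcont : IntervalIntegrable (fun w => p.derivative.eval (α + w * β))
      MeasureTheory.volume 0 1 :=
    ((p.derivative.continuous_aeval).comp
      (continuous_const.add (continuous_id.mul continuous_const))).intervalIntegrable 0 1
  rw [intervalIntegral.integral_eq_sub_of_hasDerivAt (fun w _ => hder w) hcont]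
  rw [one_mul, zero_mul, add_zero]
  ring

section
variable {d s t s' t' : ℕ} {a : ℕ → ℂ}

lemma biorth (hgen : GenPos d a) (ht : t < d) (hst : s < t)
    (hs' : s' < d) (ht' : t' < d) (hst' : s' < t') :
    ∫ w in (0:ℝ)..1, Qst d s t a (a s' + (w:ℂ) * (a t' - a s'))
      = if s = s' ∧ t = t' then 1 else 0 := by
  have hs : s < d := hst.trans ht
  have hc := Hst_deriv_s_ne hgen hs ht hst.ne
  have hint : ∀ w : ℝ, Qst d s t a (a s' + (w:ℂ) * (a t' - a s'))
      = (HstP d s t a).derivative.eval (lam s t a s' + w * (lam s t a t' - lam s t a s'))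
        / (HstP d s t a).derivative.eval (lam s t a s) := by
    intro w
    rw [Qst_eq, inner2_path]
    rfl
  by_cases hpair : s = s' ∧ t = t'
  · obtain ⟨h1, h2⟩ := hpair
    subst h1; subst h2
    have hβ : lam s t a t - lam s t a s = 0 := by rw [lam_t_eq', sub_self]
    simp only [hint, hβ, mul_zero, add_zero, div_self hc]
    simp
  · simp only [if_neg hpair]
    set β := lam s t a t' - lam s t a s' with hβdef
    by_cases hβ : β = 0
    · -- show s', t' are disjoint from {s, t}, then double root
      have heq : lam s t a t' = lam s t a s' := by
        have : lam s t a t' - lam s t a s' = 0 := hβ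
        linarith
      have hs's : s' ≠ s := by
        rintro rfl
        rcases eq_or_ne t t' with rfl | htt'
        · exact hpair ⟨rfl, rfl⟩
        · have := lam_ne hgen hs ht ht' (Nat.ne_of_gt hst') (fun h => htt' h.symm) hst.ne
          exact this heq
      have hs't : s' ≠ t := by
        intro h
        have h1 : lam s t a t' = lam s t a s := by rw [heq, h, lam_t_eq']
        have ht's : t' ≠ s := by omega
        have ht't : t' ≠ t := by omega
        exact lam_ne hgen hs ht ht' ht's ht't hst.ne h1
      have ht's : t' ≠ s := by
        intro h
        have h1 : lam s t a s' = lam s t a s := by rw [← heq, h]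
        exact lam_ne hgen hs ht hs' hs's hs't hst.ne h1
      have ht't : t' ≠ t := by
        intro h
        have h1 : lam s t a s' = lam s t a s := by rw [← heq, h, lam_t_eq']
        exact lam_ne hgen hs ht hs' hs's hs't hst.ne h1
      have hdr := Hst_deriv_double hs' ht' hs's ht's hst'.ne heq
      simp only [hint, ← hβdef, hβ, mul_zero, add_zero, hdr, zero_div]
      simp
    · simp only [hint, ← hβdef]
      rw [intervalIntegral.integral_div, integral_deriv_poly _ _ _ hβ]
      have h1 : lam s t a s' + β = lam s t a t' := by rw [hβdef]; ring
      rw [h1, Hst_root hs ht hst.ne ht', Hst_root hs ht hst.ne hs']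
      simp

end

lemma eval_poly_aeval (p : Polynomial ℝ) (ℓ : MvPolynomial (Fin 2) ℝ) (v : Fin 2 → ℝ) :
    MvPolynomial.eval v (Polynomial.aeval ℓ p) = p.eval (MvPolynomial.eval v ℓ) := by
  have h := Polynomial.aeval_algHom_apply (MvPolynomial.aeval v) ℓ p
  have h2 : (MvPolynomial.aeval v) (Polynomial.aeval ℓ p) = MvPolynomial.eval v (Polynomial.aeval ℓ p) := rfl
  have h3 : (MvPolynomial.aeval v) ℓ = MvPolynomial.eval v ℓ := rfl
  rw [h2, h3] at h
  rw [← h, Polynomial.aeval_def, Polynomial.eval₂_eq_eval_map]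
  norm_num

lemma totalDegree_poly_aeval_le (q : Polynomial ℝ) (ℓ : MvPolynomial (Fin 2) ℝ)
    (hℓ : ℓ.totalDegree ≤ 1) : (Polynomial.aeval ℓ q).totalDegree ≤ q.natDegree := by
  rw [Polynomial.aeval_eq_sum_range]
  refine le_trans (MvPolynomial.totalDegree_finset_sum _ _) ?_
  apply Finset.sup_le
  intro i hi
  refine le_trans (MvPolynomial.totalDegree_smul_le _ _) ?_
  refine le_trans (MvPolynomial.totalDegree_pow _ _) ?_
  have : i ≤ q.natDegree := by
    simp only [Finset.mem_range] at hi; omega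
  calc i * ℓ.totalDegree ≤ i * 1 := Nat.mul_le_mul_left _ hℓ
    _ ≤ q.natDegree := by omega

/-- The linear form `x ↦ ⟨θ_{st}, x⟩` as a polynomial in `(x.re, x.im)`. -/
noncomputable def lineP (s t : ℕ) (a : ℕ → ℂ) : MvPolynomial (Fin 2) ℝ :=
  MvPolynomial.C ((Complex.I * (a s - a t)).re) * MvPolynomial.X 0 +
  MvPolynomial.C ((Complex.I * (a s - a t)).im) * MvPolynomial.X 1

lemma eval_lineP {s t : ℕ} {a : ℕ → ℂ} (x : ℂ) :
    MvPolynomial.eval ![x.re, x.im] (lineP s t a) = inner2 (Complex.I * (a s - a t)) x := by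
  simp [lineP, inner2]

lemma lineP_deg {s t : ℕ} {a : ℕ → ℂ} : (lineP s t a).totalDegree ≤ 1 := by
  refine le_trans (MvPolynomial.totalDegree_add _ _) ?_
  apply max_le <;>
    refine le_trans (MvPolynomial.totalDegree_mul _ _) ?_ <;>
      rw [MvPolynomial.totalDegree_C, MvPolynomial.totalDegree_X, zero_add]

/-- `Q_{st}` as a bivariate polynomial in `(x.re, x.im)`. -/
noncomputable def qstP (d s t : ℕ) (a : ℕ → ℂ) : MvPolynomial (Fin 2) ℝ :=
  MvPolynomial.C (((HstP d s t a).derivative.eval (lam s t a s))⁻¹) *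
    Polynomial.aeval (lineP s t a) (HstP d s t a).derivative

lemma eval_qstP {d s t : ℕ} {a : ℕ → ℂ} (x : ℂ) :
    MvPolynomial.eval ![x.re, x.im] (qstP d s t a) = Qst d s t a x := by
  rw [qstP, map_mul, MvPolynomial.eval_C, eval_poly_aeval, eval_lineP, Qst_eq,
    div_eq_mul_inv, mul_comm]

lemma qstP_deg {d s t : ℕ} {a : ℕ → ℂ} (hs : s < d) : (qstP d s t a).totalDegree ≤ d - 2 := by
  refine le_trans (MvPolynomial.totalDegree_mul _ _) ?_
  rw [MvPolynomial.totalDegree_C, zero_add]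
  refine le_trans (totalDegree_poly_aeval_le _ _ lineP_deg) ?_
  have h1 : (HstP d s t a).natDegree ≤ d - 1 := by
    refine le_trans (Polynomial.natDegree_prod_le _ _) ?_
    have hc : ∀ m ∈ (Finset.range d).erase s, (X - C (lam s t a m)).natDegree = 1 :=
      fun m _ => natDegree_X_sub_C _
    rw [Finset.sum_congr rfl hc, Finset.sum_const, smul_eq_mul, mul_one,
      Finset.card_erase_of_mem (Finset.mem_range.2 hs), Finset.card_range]
  have h2 := Polynomial.natDegree_derivative_le (HstP d s t a)
  omega

/-- The index set of pairs `s < t < d`. -/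
def PairsF (d : ℕ) : Finset (ℕ × ℕ) :=
  (Finset.range d ×ˢ Finset.range d).filter fun p => p.1 < p.2

lemma mem_PairsF {d : ℕ} {p : ℕ × ℕ} : p ∈ PairsF d ↔ p.1 < p.2 ∧ p.2 < d := by
  simp only [PairsF, Finset.mem_filter, Finset.mem_product, Finset.mem_range]
  omega

lemma sum_pairs {M : Type*} [AddCommMonoid M] (d : ℕ) (g : ℕ → ℕ → M) :
    ∑ s ∈ Finset.range d, ∑ t ∈ Finset.Ico (s+1) d, g s t = ∑ p ∈ PairsF d, g p.1 p.2 := by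
  rw [PairsF, Finset.sum_filter, Finset.sum_product]
  refine Finset.sum_congr rfl fun s hs => ?_
  rw [← Finset.sum_filter]
  refine Finset.sum_congr ?_ (fun _ _ => rfl)
  ext u
  simp only [Finset.mem_Ico, Finset.mem_filter, Finset.mem_range]
  omega

lemma finsupp_sum_fin2 (n : Fin 2 →₀ ℕ) : (n.sum fun _ e => e) = n 0 + n 1 := by
  rw [Finsupp.sum_fintype _ _ (fun _ => rfl)]
  exact Fin.sum_univ_two _

/-- Bijection between pairs `s < t < d` and exponents of total degree `≤ d − 2`. -/
noncomputable def pairEquiv (d : ℕ) (hd : 2 ≤ d) :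
    {p : ℕ × ℕ // p ∈ PairsF d} ≃ {n : Fin 2 →₀ ℕ | (n.sum fun _ e => e) ≤ d - 2} where
  toFun p := ⟨Finsupp.single 0 p.1.1 + Finsupp.single 1 (p.1.2 - p.1.1 - 1), by
    have hp := mem_PairsF.1 p.2
    simp only [Set.mem_setOf_eq, finsupp_sum_fin2, Finsupp.add_apply, Finsupp.single_apply]
    norm_num
    omega⟩
  invFun n := ⟨(n.1 0, n.1 0 + n.1 1 + 1), by
    have h := n.2
    simp only [Set.mem_setOf_eq, finsupp_sum_fin2] at h
    exact mem_PairsF.2 ⟨by omega, by omega⟩⟩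
  left_inv p := by
    have hp := mem_PairsF.1 p.2
    apply Subtype.ext
    apply Prod.ext <;>
      simp only [Finsupp.add_apply, Finsupp.single_apply] <;> norm_num <;> omega
  right_inv n := by
    apply Subtype.ext
    ext i
    fin_cases i <;> simp [Finsupp.single_apply] <;> omega

lemma cont_Qst {d s t : ℕ} {a : ℕ → ℂ} : Continuous (Qst d s t a) := by
  have h : Qst d s t a = fun x =>
      (HstP d s t a).derivative.eval (inner2 (Complex.I * (a s - a t)) x) /
        (HstP d s t a).derivative.eval (lam s t a s) := funext Qst_eq
  rw [h]
  apply Continuous.div_const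
  apply (HstP d s t a).derivative.continuous_aeval.comp
  exact (continuous_const.mul Complex.continuous_re).add
    (continuous_const.mul Complex.continuous_im)

lemma cont_path {z u : ℂ} : Continuous fun w : ℝ => z + (w:ℂ) * u :=
  continuous_const.add (Complex.continuous_ofReal.mul continuous_const)
set_option maxHeartbeats 1000000 in
theorem reproduction (d : ℕ) (hd : 2 ≤ d) (a : ℕ → ℂ) (hgen : GenPos d a)
    (Q : MvPolynomial (Fin 2) ℝ) (hQ : Q.totalDegree ≤ d - 2) (x : ℂ) :
    MvPolynomial.eval ![x.re, x.im] Q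
      = ∑ p ∈ PairsF d, (∫ w in (0:ℝ)..1,
          MvPolynomial.eval ![(a p.1 + (w:ℂ) * (a p.2 - a p.1)).re,
            (a p.1 + (w:ℂ) * (a p.2 - a p.1)).im] Q) * Qst d p.1 p.2 a x := by
  classical
  set V := MvPolynomial.restrictTotalDegree (Fin 2) ℝ (d-2) with hV
  haveI : Nonempty {p : ℕ × ℕ // p ∈ PairsF d} :=
    ⟨⟨(0,1), mem_PairsF.2 ⟨Nat.zero_lt_one, hd⟩⟩⟩
  set q : {p : ℕ × ℕ // p ∈ PairsF d} → V := fun p =>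
    ⟨qstP d p.1.1 p.1.2 a, (MvPolynomial.mem_restrictTotalDegree _ _ _).2
      (qstP_deg ((mem_PairsF.1 p.2).1.trans (mem_PairsF.1 p.2).2))⟩ with hq
  -- biorthogonality in integral form for coefficient extraction
  have hcontQ : ∀ (s t : ℕ) (z u : ℂ),
      IntervalIntegrable (fun w : ℝ => Qst d s t a (z + (w:ℂ) * u))
        MeasureTheory.volume 0 1 :=
    fun s t z u => (cont_Qst.comp cont_path).intervalIntegrable 0 1
  have hdelta : ∀ (c : {p : ℕ × ℕ // p ∈ PairsF d} → ℝ)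
      (j : {p : ℕ × ℕ // p ∈ PairsF d}),
      (∀ w : ℝ, ∑ i, c i * Qst d i.1.1 i.1.2 a
          (a j.1.1 + (w:ℂ) * (a j.1.2 - a j.1.1)) = 0) → c j = 0 := by
    intro c j hw
    have h0 : (∫ w in (0:ℝ)..1, ∑ i, c i * Qst d i.1.1 i.1.2 a
        (a j.1.1 + (w:ℂ) * (a j.1.2 - a j.1.1))) = 0 := by
      simp only [hw, intervalIntegral.integral_zero]
    have hsum := intervalIntegral.integral_finset_sum (μ := MeasureTheory.volume)
      (a := (0:ℝ)) (b := 1) (s := Finset.univ)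
      (f := fun (i : {p : ℕ × ℕ // p ∈ PairsF d}) (w : ℝ) => c i * Qst d i.1.1 i.1.2 a
        (a j.1.1 + (w:ℂ) * (a j.1.2 - a j.1.1)))
      (fun i _ => ((hcontQ i.1.1 i.1.2 _ _).const_mul (c i)))
    rw [hsum] at h0
    have hib := mem_PairsF.1 j.2
    have h1 : ∀ i : {p : ℕ × ℕ // p ∈ PairsF d},
        (∫ w in (0:ℝ)..1, c i * Qst d i.1.1 i.1.2 a
          (a j.1.1 + (w:ℂ) * (a j.1.2 - a j.1.1))) = if i = j then c i else 0 := by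
      intro i
      have hia := mem_PairsF.1 i.2
      rw [intervalIntegral.integral_const_mul,
        biorth hgen hia.2 hia.1 (hib.1.trans hib.2) hib.2 hib.1]
      have hcond : (i.1.1 = j.1.1 ∧ i.1.2 = j.1.2) ↔ i = j := by
        constructor
        · intro h; exact Subtype.ext (Prod.ext h.1 h.2)
        · intro h; rw [h]; exact ⟨rfl, rfl⟩
      by_cases h : i = j
      · rw [if_pos (hcond.2 h), if_pos h]; ring
      · rw [if_neg (fun hc => h (hcond.1 hc)), if_neg h]; ring
    rw [Finset.sum_congr rfl (fun i _ => h1 i), Finset.sum_ite_eq' _ j c] at h0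
    simpa using h0
  have hqli : LinearIndependent ℝ q := by
    rw [Fintype.linearIndependent_iff]
    intro c hc j
    have hc2 : (∑ i, c i • qstP d i.1.1 i.1.2 a) = (0 : MvPolynomial (Fin 2) ℝ) := by
      have := congrArg (Subtype.val) hc
      simpa [hq] using this
    apply hdelta c j
    intro w
    have hthis := congrArg (MvPolynomial.eval
      ![(a j.1.1 + (w:ℂ) * (a j.1.2 - a j.1.1)).re,
        (a j.1.1 + (w:ℂ) * (a j.1.2 - a j.1.1)).im]) hc2
    rw [map_sum, map_zero] at hthis
    have h4 : ∑ i, c i * Qst d i.1.1 i.1.2 a (a j.1.1 + (w:ℂ) * (a j.1.2 - a j.1.1))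
        = ∑ i, MvPolynomial.eval
          ![(a j.1.1 + (w:ℂ) * (a j.1.2 - a j.1.1)).re,
            (a j.1.1 + (w:ℂ) * (a j.1.2 - a j.1.1)).im] (c i • qstP d i.1.1 i.1.2 a) :=
      Finset.sum_congr rfl fun i _ => by rw [MvPolynomial.smul_eval, eval_qstP]
    rw [h4]
    exact hthis
  have hcard : Fintype.card {p : ℕ × ℕ // p ∈ PairsF d} = Module.finrank ℝ V := by
    haveI : Fintype {n : Fin 2 →₀ ℕ | (n.sum fun _ e => e) ≤ d - 2} :=
      Fintype.ofEquiv _ (pairEquiv d hd)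
    have hb := Module.finrank_eq_card_basis
      (MvPolynomial.basisRestrictSupport ℝ {n : Fin 2 →₀ ℕ | (n.sum fun _ e => e) ≤ d - 2})
    rw [hV]
    rw [show MvPolynomial.restrictTotalDegree (Fin 2) ℝ (d-2)
      = MvPolynomial.restrictSupport ℝ {n : Fin 2 →₀ ℕ | (n.sum fun _ e => e) ≤ d - 2} from rfl]
    rw [hb]
    exact Fintype.card_congr (pairEquiv d hd)
  set b := basisOfLinearIndependentOfCardEqFinrank hqli hcard with hbdef
  have hb : ⇑b = q := coe_basisOfLinearIndependentOfCardEqFinrank hqli hcard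
  set Qv : V := ⟨Q, (MvPolynomial.mem_restrictTotalDegree _ _ _).2 hQ⟩ with hQv
  have hrepr := b.sum_repr Qv
  rw [hb] at hrepr
  set r : {p : ℕ × ℕ // p ∈ PairsF d} → ℝ := fun i => b.repr Qv i with hr
  have hQeq : Q = ∑ i, r i • qstP d i.1.1 i.1.2 a := by
    have := congrArg (Subtype.val) hrepr
    simpa [hq] using this.symm
  -- evaluation identity
  have hE1 : ∀ y : ℂ, MvPolynomial.eval ![y.re, y.im] Q
      = ∑ i, r i * Qst d i.1.1 i.1.2 a y := by
    intro y
    rw [hQeq, map_sum]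
    exact Finset.sum_congr rfl fun i _ => by
      rw [MvPolynomial.smul_eval, eval_qstP]
  -- coefficient identity
  have hE2 : ∀ j : {p : ℕ × ℕ // p ∈ PairsF d},
      (∫ w in (0:ℝ)..1, MvPolynomial.eval
        ![(a j.1.1 + (w:ℂ) * (a j.1.2 - a j.1.1)).re,
          (a j.1.1 + (w:ℂ) * (a j.1.2 - a j.1.1)).im] Q) = r j := by
    intro j
    have hib := mem_PairsF.1 j.2
    have h0 : (∫ w in (0:ℝ)..1, MvPolynomial.eval
        ![(a j.1.1 + (w:ℂ) * (a j.1.2 - a j.1.1)).re,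
          (a j.1.1 + (w:ℂ) * (a j.1.2 - a j.1.1)).im] Q)
        = ∫ w in (0:ℝ)..1, ∑ i, r i * Qst d i.1.1 i.1.2 a
            (a j.1.1 + (w:ℂ) * (a j.1.2 - a j.1.1)) := by
      apply intervalIntegral.integral_congr
      intro w _
      exact hE1 _
    have hsum := intervalIntegral.integral_finset_sum (μ := MeasureTheory.volume)
      (a := (0:ℝ)) (b := 1) (s := Finset.univ)
      (f := fun (i : {p : ℕ × ℕ // p ∈ PairsF d}) (w : ℝ) => r i * Qst d i.1.1 i.1.2 a
        (a j.1.1 + (w:ℂ) * (a j.1.2 - a j.1.1)))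
      (fun i _ => ((hcontQ i.1.1 i.1.2 _ _).const_mul (r i)))
    rw [h0, hsum]
    have h1 : ∀ i : {p : ℕ × ℕ // p ∈ PairsF d},
        (∫ w in (0:ℝ)..1, r i * Qst d i.1.1 i.1.2 a
          (a j.1.1 + (w:ℂ) * (a j.1.2 - a j.1.1))) = if i = j then r i else 0 := by
      intro i
      have hia := mem_PairsF.1 i.2
      rw [intervalIntegral.integral_const_mul,
        biorth hgen hia.2 hia.1 (hib.1.trans hib.2) hib.2 hib.1]
      have hcond : (i.1.1 = j.1.1 ∧ i.1.2 = j.1.2) ↔ i = j := by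
        constructor
        · intro h; exact Subtype.ext (Prod.ext h.1 h.2)
        · intro h; rw [h]; exact ⟨rfl, rfl⟩
      by_cases h : i = j
      · rw [if_pos (hcond.2 h), if_pos h]; ring
      · rw [if_neg (fun hc => h (hcond.1 hc)), if_neg h]; ring
    rw [Finset.sum_congr rfl (fun i _ => h1 i), Finset.sum_ite_eq' _ j r]
    simp
  rw [← Finset.sum_coe_sort (PairsF d)]
  rw [hE1 x]
  exact Finset.sum_congr rfl fun i _ => by rw [hE2 i]

theorem stmt5 (d : ℕ) (hd : 2 ≤ d) (a : ℕ → ℂ) (hgen : GenPos d a)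
    (K : Set ℂ) (hKconv : Convex ℝ K) (hKcomp : IsCompact K) (hA : ∀ m < d, a m ∈ K)
    (f : ℂ → ℝ) (hf : ContinuousOn f K)
    (H : ℂ → ℝ)
    (hH : H = fun x => ∑ s ∈ Finset.range d, ∑ t ∈ Finset.Ico (s + 1) d,
      Qst d s t a x * ∫ w in (0:ℝ)..1, f (a s + (w : ℂ) * (a t - a s)))
    (Q : MvPolynomial (Fin 2) ℝ) (hQ : Q.totalDegree ≤ d - 2) :
    (⨆ x : K, |f (x : ℂ) - H (x : ℂ)|) ≤
      (1 + ∑ s ∈ Finset.range d, ∑ t ∈ Finset.Ico (s + 1) d,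
          ⨆ x : K, |Qst d s t a (x : ℂ)|) *
        ⨆ x : K, |f (x : ℂ) - MvPolynomial.eval ![(x : ℂ).re, (x : ℂ).im] Q| := by
  classical
  have hvec : Continuous fun x : ℂ => (![x.re, x.im] : Fin 2 → ℝ) := by
    apply continuous_pi
    intro i
    fin_cases i
    · simpa using Complex.continuous_re
    · simpa using Complex.continuous_im
  have hcQ : Continuous fun y : ℂ => MvPolynomial.eval ![y.re, y.im] Q :=
    (MvPolynomial.continuous_eval Q).comp hvec
  have hKne : K.Nonempty := ⟨a 0, hA 0 (by omega)⟩
  haveI : Nonempty K := hKne.to_subtype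
  have hgK : ContinuousOn (fun y : ℂ => |f y - MvPolynomial.eval ![y.re, y.im] Q|) K :=
    (hf.sub hcQ.continuousOn).abs
  set M := ⨆ x : K, |f (x:ℂ) - MvPolynomial.eval ![(x:ℂ).re, (x:ℂ).im] Q| with hM
  have hbdd : BddAbove (Set.range fun x : K =>
      |f (x:ℂ) - MvPolynomial.eval ![(x:ℂ).re, (x:ℂ).im] Q|) := by
    have h1 : IsCompact ((fun y : ℂ => |f y - MvPolynomial.eval ![y.re, y.im] Q|) '' K) :=
      hKcomp.image_of_continuousOn hgK
    have h2 : (Set.range fun x : K => |f (x:ℂ) - MvPolynomial.eval ![(x:ℂ).re, (x:ℂ).im] Q|)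
        = (fun y : ℂ => |f y - MvPolynomial.eval ![y.re, y.im] Q|) '' K :=
      (Set.image_eq_range (fun y : ℂ => |f y - MvPolynomial.eval ![y.re, y.im] Q|) K).symm
    rw [h2]
    exact h1.bddAbove
  have hMb : ∀ y ∈ K, |f y - MvPolynomial.eval ![y.re, y.im] Q| ≤ M := fun y hy =>
    le_ciSup hbdd (⟨y, hy⟩ : K)
  have hM0 : 0 ≤ M := le_trans (abs_nonneg _) (hMb (a 0) (hA 0 (by omega)))
  have hbddQ : ∀ p : ℕ × ℕ, BddAbove (Set.range fun x : K => |Qst d p.1 p.2 a (x:ℂ)|) := by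
    intro p
    have h1 : IsCompact ((fun y : ℂ => |Qst d p.1 p.2 a y|) '' K) :=
      hKcomp.image_of_continuousOn cont_Qst.abs.continuousOn
    have h2 : (Set.range fun x : K => |Qst d p.1 p.2 a (x:ℂ)|)
        = (fun y : ℂ => |Qst d p.1 p.2 a y|) '' K :=
      (Set.image_eq_range (fun y : ℂ => |Qst d p.1 p.2 a y|) K).symm
    rw [h2]
    exact h1.bddAbove
  have hQb : ∀ (p : ℕ × ℕ), ∀ y ∈ K,
      |Qst d p.1 p.2 a y| ≤ ⨆ x : K, |Qst d p.1 p.2 a (x:ℂ)| := fun p y hy =>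
    le_ciSup (hbddQ p) (⟨y, hy⟩ : K)
  have hQs0 : ∀ p : ℕ × ℕ, 0 ≤ ⨆ x : K, |Qst d p.1 p.2 a (x:ℂ)| := fun p =>
    le_trans (abs_nonneg _) (hQb p (a 0) (hA 0 (by omega)))
  have hseg : ∀ p ∈ PairsF d, ∀ w ∈ Set.uIcc (0:ℝ) 1,
      a p.1 + (w:ℂ) * (a p.2 - a p.1) ∈ K := by
    intro p hp w hw
    obtain ⟨h1, h2⟩ := mem_PairsF.1 hp
    rw [Set.uIcc_of_le (by norm_num : (0:ℝ) ≤ 1)] at hw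
    have heq : a p.1 + (w:ℂ) * (a p.2 - a p.1) = (1-w) • a p.1 + w • a p.2 := by
      simp only [Complex.real_smul]
      push_cast
      ring
    rw [heq]
    exact hKconv (hA p.1 (h1.trans h2)) (hA p.2 h2) (by linarith [hw.2]) hw.1 (by ring)
  have hintf : ∀ p ∈ PairsF d, IntervalIntegrable
      (fun w : ℝ => f (a p.1 + (w:ℂ) * (a p.2 - a p.1))) MeasureTheory.volume 0 1 := by
    intro p hp
    apply ContinuousOn.intervalIntegrable
    exact hf.comp cont_path.continuousOn (hseg p hp)
  have hintQ : ∀ p : ℕ × ℕ, IntervalIntegrable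
      (fun w : ℝ => MvPolynomial.eval ![(a p.1 + (w:ℂ) * (a p.2 - a p.1)).re,
        (a p.1 + (w:ℂ) * (a p.2 - a p.1)).im] Q) MeasureTheory.volume 0 1 := fun p =>
    (hcQ.comp cont_path).intervalIntegrable 0 1
  have hIb : ∀ p ∈ PairsF d,
      |∫ w in (0:ℝ)..1, (f (a p.1 + (w:ℂ) * (a p.2 - a p.1))
        - MvPolynomial.eval ![(a p.1 + (w:ℂ) * (a p.2 - a p.1)).re,
            (a p.1 + (w:ℂ) * (a p.2 - a p.1)).im] Q)| ≤ M := by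
    intro p hp
    have h1 := intervalIntegral.norm_integral_le_of_norm_le_const (C := M)
      (f := fun w : ℝ => f (a p.1 + (w:ℂ) * (a p.2 - a p.1))
        - MvPolynomial.eval ![(a p.1 + (w:ℂ) * (a p.2 - a p.1)).re,
            (a p.1 + (w:ℂ) * (a p.2 - a p.1)).im] Q) (a := 0) (b := 1) ?_
    · simpa using h1
    · intro w hw
      have hw' : w ∈ Set.uIcc (0:ℝ) 1 := Set.uIoc_subset_uIcc hw
      exact hMb _ (hseg p hp w hw')
  have hpt : ∀ x ∈ K, |f x - H x|
      ≤ (1 + ∑ p ∈ PairsF d, ⨆ x : K, |Qst d p.1 p.2 a (x:ℂ)|) * M := by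
    intro x hx
    have hHx : H x = ∑ p ∈ PairsF d, Qst d p.1 p.2 a x
        * ∫ w in (0:ℝ)..1, f (a p.1 + (w:ℂ) * (a p.2 - a p.1)) := by
      rw [hH]
      exact sum_pairs d _
    have hrep := reproduction d hd a hgen Q hQ x
    have h5 : ∑ p ∈ PairsF d, Qst d p.1 p.2 a x * ∫ w in (0:ℝ)..1,
          (f (a p.1 + (w:ℂ) * (a p.2 - a p.1))
            - MvPolynomial.eval ![(a p.1 + (w:ℂ) * (a p.2 - a p.1)).re,
                (a p.1 + (w:ℂ) * (a p.2 - a p.1)).im] Q)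
        = (∑ p ∈ PairsF d, Qst d p.1 p.2 a x
            * ∫ w in (0:ℝ)..1, f (a p.1 + (w:ℂ) * (a p.2 - a p.1)))
          - ∑ p ∈ PairsF d, (∫ w in (0:ℝ)..1,
              MvPolynomial.eval ![(a p.1 + (w:ℂ) * (a p.2 - a p.1)).re,
                (a p.1 + (w:ℂ) * (a p.2 - a p.1)).im] Q) * Qst d p.1 p.2 a x := by
      rw [← Finset.sum_sub_distrib]
      refine Finset.sum_congr rfl fun p hp => ?_
      rw [intervalIntegral.integral_sub (hintf p hp) (hintQ p)]
      ring
    have hdiff : f x - H x = (f x - MvPolynomial.eval ![x.re, x.im] Q)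
        - ∑ p ∈ PairsF d, Qst d p.1 p.2 a x * ∫ w in (0:ℝ)..1,
            (f (a p.1 + (w:ℂ) * (a p.2 - a p.1))
              - MvPolynomial.eval ![(a p.1 + (w:ℂ) * (a p.2 - a p.1)).re,
                  (a p.1 + (w:ℂ) * (a p.2 - a p.1)).im] Q) := by
      rw [h5, hHx, hrep]
      ring
    rw [hdiff, sub_eq_add_neg]
    refine le_trans (abs_add_le _ _) ?_
    rw [abs_neg]
    have hb1 : |f x - MvPolynomial.eval ![x.re, x.im] Q| ≤ M := hMb x hx
    have hb2 : |∑ p ∈ PairsF d, Qst d p.1 p.2 a x * ∫ w in (0:ℝ)..1,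
        (f (a p.1 + (w:ℂ) * (a p.2 - a p.1))
          - MvPolynomial.eval ![(a p.1 + (w:ℂ) * (a p.2 - a p.1)).re,
              (a p.1 + (w:ℂ) * (a p.2 - a p.1)).im] Q)|
        ≤ ∑ p ∈ PairsF d, (⨆ x : K, |Qst d p.1 p.2 a (x:ℂ)|) * M := by
      refine le_trans (Finset.abs_sum_le_sum_abs _ _) ?_
      refine Finset.sum_le_sum fun p hp => ?_
      rw [abs_mul]
      exact mul_le_mul (hQb p x hx) (hIb p hp) (abs_nonneg _) (hQs0 p)
    calc |f x - MvPolynomial.eval ![x.re, x.im] Q|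
        + |∑ p ∈ PairsF d, Qst d p.1 p.2 a x * ∫ w in (0:ℝ)..1,
          (f (a p.1 + (w:ℂ) * (a p.2 - a p.1))
            - MvPolynomial.eval ![(a p.1 + (w:ℂ) * (a p.2 - a p.1)).re,
                (a p.1 + (w:ℂ) * (a p.2 - a p.1)).im] Q)|
        ≤ M + ∑ p ∈ PairsF d, (⨆ x : K, |Qst d p.1 p.2 a (x:ℂ)|) * M := by
          exact add_le_add hb1 hb2
      _ = (1 + ∑ p ∈ PairsF d, ⨆ x : K, |Qst d p.1 p.2 a (x:ℂ)|) * M := by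
          rw [add_mul, one_mul, Finset.sum_mul]
  rw [sum_pairs d (fun s t => ⨆ x : K, |Qst d s t a (x:ℂ)|)]
  exact ciSup_le fun x => hpt (x:ℂ) x.2
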